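/- With r₁ = 3ℓ⁽¹⁾w⁽⁰⁾ − 2ℓ⁽⁰⁾w⁽¹⁾, the following identity of polynomials holds in P: r₁³ = (−81 ℓ⁽⁰⁾ℓ⁽¹⁾ℓ⁽²⁾w⁽⁰⁾ − (27/2)(ℓ⁽⁰⁾)²ℓ⁽³⁾w⁽⁰⁾ + 18(ℓ⁽⁰⁾)²ℓ⁽²⁾w⁽¹⁾ − 4(w⁽¹⁾)³ + 15 w⁽⁰⁾w⁽¹⁾w⁽²⁾ + 9(w⁽⁰⁾)²w⁽³⁾)·f⁽⁰⁾ + ((9/2)(ℓ⁽⁰⁾)²ℓ⁽²⁾w⁽⁰⁾ + 12(ℓ⁽⁰⁾)²ℓ⁽¹⁾w⁽¹⁾ − 7 w⁽⁰⁾(w⁽¹⁾)² − 3(w⁽⁰⁾)²w⁽²⁾)·f⁽¹⁾ + (−(9/2)(ℓ⁽⁰⁾)²ℓ⁽¹⁾w⁽⁰⁾ − 6(ℓ⁽⁰⁾)³w⁽¹⁾ + 9(w⁽⁰⁾)²w⁽¹⁾)·f⁽²⁾ + ((9/2)(ℓ⁽⁰⁾)³w⁽⁰⁾ − (9/2)(w⁽⁰⁾)³)·f⁽³⁾.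 -/
import Mathlib


open MvPolynomial

noncomputable section

/-- The polynomial ring `P = ℂ[ℓ⁽⁰⁾, ℓ⁽¹⁾, …, w⁽⁰⁾, w⁽¹⁾, …]`:
variables are indexed by `Fin 2 × ℕ`, where `(0, i)` is `ℓ⁽ⁱ⁾` and `(1, i)` is `w⁽ⁱ⁾`. -/
abbrev P : Type := MvPolynomial (Fin 2 × ℕ) ℂ

/-- The unique ℂ-linear derivation `D : P → P` with `D(ℓ⁽ⁱ⁾) = ℓ⁽ⁱ⁺¹⁾`, `D(w⁽ⁱ⁾) = w⁽ⁱ⁺¹⁾`. -/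
def D : Derivation ℂ P P :=
  MvPolynomial.mkDerivation ℂ (fun p : Fin 2 × ℕ => (X (p.1, p.2 + 1) : P))

/-- `ℓ⁽ⁱ⁾` -/
def lv (i : ℕ) : P := X (0, i)

/-- `w⁽ⁱ⁾` -/
def wv (i : ℕ) : P := X (1, i)

/-- `f = (w⁽⁰⁾)² − (ℓ⁽⁰⁾)³`. -/
def f : P := wv 0 ^ 2 - lv 0 ^ 3

/-- `f⁽ⁱ⁾ = Dⁱ(f)`. -/
def fd (i : ℕ) : P := (⇑D)^[i] f

/-- `r₁ = 3ℓ⁽¹⁾w⁽⁰⁾ − 2ℓ⁽⁰⁾w⁽¹⁾`. -/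
def r₁ : P := 3 * lv 1 * wv 0 - 2 * lv 0 * wv 1

theorem r₁_cubed_identity :
    r₁ ^ 3 =
      (-(81 : P) * lv 0 * lv 1 * lv 2 * wv 0 - C ((27 : ℂ)/2) * lv 0 ^ 2 * lv 3 * wv 0
        + 18 * lv 0 ^ 2 * lv 2 * wv 1 - 4 * wv 1 ^ 3 + 15 * wv 0 * wv 1 * wv 2
        + 9 * wv 0 ^ 2 * wv 3) * fd 0
      + (C ((9 : ℂ)/2) * lv 0 ^ 2 * lv 2 * wv 0 + 12 * lv 0 ^ 2 * lv 1 * wv 1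
        - 7 * wv 0 * wv 1 ^ 2 - 3 * wv 0 ^ 2 * wv 2) * fd 1
      + (-C ((9 : ℂ)/2) * lv 0 ^ 2 * lv 1 * wv 0 - 6 * lv 0 ^ 3 * wv 1
        + 9 * wv 0 ^ 2 * wv 1) * fd 2
      + (C ((9 : ℂ)/2) * lv 0 ^ 3 * wv 0 - C ((9 : ℂ)/2) * wv 0 ^ 3) * fd 3 := by
  have Dl : ∀ i, D (lv i) = lv (i + 1) := fun i => by
    simp [D, lv, MvPolynomial.mkDerivation_X]
  have Dw : ∀ i, D (wv i) = wv (i + 1) := fun i => by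
    simp [D, wv, MvPolynomial.mkDerivation_X]
  have Dn : ∀ n : ℕ, D ((n : P)) = 0 := fun n => Derivation.map_natCast D n
  have D2 : D (2 : P) = 0 := by rw [show (2:P) = ((2:ℕ):P) by norm_num]; exact Dn 2
  have D3 : D (3 : P) = 0 := by rw [show (3:P) = ((3:ℕ):P) by norm_num]; exact Dn 3
  have D6 : D (6 : P) = 0 := by rw [show (6:P) = ((6:ℕ):P) by norm_num]; exact Dn 6
  have h0 : fd 0 = wv 0 ^ 2 - lv 0 ^ 3 := rfl
  have h1 : fd 1 = 2 * wv 0 * wv 1 - 3 * lv 0 ^ 2 * lv 1 := by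
    show D f = _
    simp [f, Dl, Dw, Derivation.leibniz_pow, D2, D3]
    ring
  have h2 : fd 2 = 2 * wv 1 ^ 2 + 2 * wv 0 * wv 2
      - 6 * lv 0 * lv 1 ^ 2 - 3 * lv 0 ^ 2 * lv 2 := by
    have e : fd 2 = D (fd 1) := by
      simp [fd, Function.iterate_succ', Function.comp]
    rw [e, h1]
    simp [Dl, Dw, Derivation.leibniz_pow, D2, D3, D6]
    ring
  have h3 : fd 3 = 6 * wv 1 * wv 2 + 2 * wv 0 * wv 3 - 6 * lv 1 ^ 3
      - 18 * lv 0 * lv 1 * lv 2 - 3 * lv 0 ^ 2 * lv 3 := by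
    have e : fd 3 = D (fd 2) := by
      simp [fd, Function.iterate_succ', Function.comp]
    rw [e, h2]
    simp [Dl, Dw, Derivation.leibniz_pow, D2, D3, D6]
    ring
  have hc27 : (C ((27 : ℂ)/2) : P) * 2 = 27 := by
    rw [show (2:P) = C (2:ℂ) from (map_ofNat C 2).symm, ← C_mul,
      show (27:ℂ)/2 * 2 = 27 by norm_num]
    exact map_ofNat C 27
  have hc9 : (C ((9 : ℂ)/2) : P) * 2 = 9 := by
    rw [show (2:P) = C (2:ℂ) from (map_ofNat C 2).symm, ← C_mul,
      show (9:ℂ)/2 * 2 = 9 by norm_num]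
    exact map_ofNat C 9
  rw [h0, h1, h2, h3, r₁]
  apply mul_left_cancel₀ (show (2:P) ≠ 0 by norm_num)
  linear_combination
    ((lv 0 ^ 2 * lv 3 * wv 0) * (wv 0 ^ 2 - lv 0 ^ 3)) * hc27
    - (lv 0 ^ 2 * lv 2 * wv 0 * (2 * wv 0 * wv 1 - 3 * lv 0 ^ 2 * lv 1)
      - lv 0 ^ 2 * lv 1 * wv 0 * (2 * wv 1 ^ 2 + 2 * wv 0 * wv 2
        - 6 * lv 0 * lv 1 ^ 2 - 3 * lv 0 ^ 2 * lv 2)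
      + (lv 0 ^ 3 * wv 0 - wv 0 ^ 3) * (6 * wv 1 * wv 2 + 2 * wv 0 * wv 3
        - 6 * lv 1 ^ 3 - 18 * lv 0 * lv 1 * lv 2 - 3 * lv 0 ^ 2 * lv 3)) * hc9
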